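/- Let I be a left rooted quiver and A an abelian category with exact coproducts. Let S = {S_i} be a family of full subcategories of A, each closed under extensions and small coproducts, such that S is compatible (i.e. S_i ⊆ S_j along every arrow i → j, under the identity transition functors). Then for every representation M of I in A with the property that the canonical morphism φ_i^M : ⨁_{arrows a with target i} M_{s(a)} → M_i is a monomorphism with cokernel in S_i for all i, one has M_i ∈ S_i for all vertices i. -/

import Mathlib

universe v u

namespace Paper

open CategoryTheory CategoryTheory.Limits

/-- The transfinite filtration `χ ↦ ⋃_{μ ≤ χ} V_μ` of the vertex set of a quiver, where
`V_0 = ∅`, `V_{χ+1}` is the set of vertices that are not the target of any arrow whose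
source lies outside `⋃_{μ ≤ χ} V_μ`, and `V_χ = ⋃_{μ < χ} V_μ` at limit ordinals. -/
noncomputable def rootFiltration (V : Type v) [Quiver V] (χ : Ordinal.{v}) : Set V :=
  Ordinal.limitRecOn χ
    (∅ : Set V)
    (fun _ W => W ∪ { i : V | ∀ ⦃j : V⦄, (j ⟶ i) → j ∈ W })
    (fun χ' _ ih => ⋃ (μ : Ordinal.{v}) (h : μ < χ'), ih μ h)

/-- A quiver is left rooted if the transfinite sequence `V_χ` exhausts all the vertices. -/
def IsLeftRooted (V : Type v) [Quiver V] : Prop :=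
  ∃ lam : Ordinal.{v}, rootFiltration V lam = Set.univ

/-- `0 → X → Y → Z → 0` is a short exact sequence. -/
def IsSES {A : Type u} [Category.{v} A] [Abelian A] {X Y Z : A}
    (i : X ⟶ Y) (p : Y ⟶ Z) : Prop :=
  Mono i ∧ Epi p ∧ ∃ w : i ≫ p = 0, (ShortComplex.mk i p w).Exact

/-- A representation of a quiver `V` in a category `A`. -/
structure QuivRep (V : Type v) [Quiver.{v} V] (A : Type u) [Category.{v} A] where
  obj : V → A
  map : ∀ ⦃i j : V⦄, (i ⟶ j) → (obj i ⟶ obj j)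

variable {V : Type v} [Quiver.{v} V] {A : Type u} [Category.{v} A]

/-- The canonical morphism `φᵢᴹ : ⨁_{a ∈ I(•,i)} M_{s(a)} ⟶ M_i` induced by the structure
maps of a quiver representation `M`. -/
noncomputable def phi [HasCoproducts.{v} A] (M : QuivRep V A) (i : V) :
    (∐ fun p : Σ j : V, j ⟶ i => M.obj p.1) ⟶ M.obj i :=
  Sigma.desc fun p => M.map p.2

/-! Transfinite induction along `V_χ`: if every arrow into `i` starts at a vertex `j` with
`M_j ∈ S_j ⊆ S_i`, then `⨁ M_{s(a)} ∈ S_i`, and the short exact sequence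
`0 → ⨁ M_{s(a)} → M_i → coker φᵢᴹ → 0` puts `M_i` in `S_i`. -/

section RootFiltration

variable {W : Type v} [Quiver W]

theorem rootFiltration_zero : rootFiltration W 0 = ∅ :=
  Ordinal.limitRecOn_zero ..

theorem rootFiltration_add_one (χ : Ordinal.{v}) :
    rootFiltration W (χ + 1) =
      rootFiltration W χ ∪ { i : W | ∀ ⦃j : W⦄, (j ⟶ i) → j ∈ rootFiltration W χ } :=
  Ordinal.limitRecOn_add_one ..

theorem rootFiltration_limit {χ : Ordinal.{v}} (h : Order.IsSuccLimit χ) :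
    rootFiltration W χ = ⋃ (μ : Ordinal.{v}) (_ : μ < χ), rootFiltration W μ :=
  Ordinal.limitRecOn_limit _ _ _ _ h

theorem rootFiltration_subset {P : Set W}
    (hP : ∀ i, (∀ ⦃j : W⦄, (j ⟶ i) → j ∈ P) → i ∈ P) (χ : Ordinal.{v}) :
    rootFiltration W χ ⊆ P := by
  induction χ using Ordinal.limitRecOn with
  | zero => simp [rootFiltration_zero]
  | add_one μ ih =>
    rw [rootFiltration_add_one]
    exact Set.union_subset ih fun i hi => hP i fun _ a => ih (hi a)
  | limit χ hχ ih =>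
    rw [rootFiltration_limit hχ]
    exact Set.iUnion₂_subset ih

theorem IsLeftRooted.induction (hW : IsLeftRooted W) {P : W → Prop}
    (hP : ∀ i, (∀ ⦃j : W⦄, (j ⟶ i) → P j) → P i) (i : W) : P i := by
  obtain ⟨lam, hlam⟩ := hW
  exact rootFiltration_subset (P := {i | P i}) hP lam (hlam ▸ Set.mem_univ i)

end RootFiltration

theorem isSES_cokernel_of_mono [Abelian A] {X Y : A}
    (f : X ⟶ Y) [Mono f] : IsSES f (cokernel.π f) :=
  ⟨inferInstance, inferInstance, cokernel.condition f,
    ShortComplex.exact_of_g_is_cokernel _ (cokernelIsCokernel f)⟩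

end Paper

open Paper CategoryTheory CategoryTheory.Limits in
theorem stmt7_general (V : Type v) [Quiver.{v} V] (hV : IsLeftRooted V)
    (A : Type u) [Category.{v} A] [Abelian A] [HasCoproducts.{v} A]
    (S : V → A → Prop)
    (hext : ∀ i : V, ∀ ⦃X Y Z : A⦄ (f : X ⟶ Y) (g : Y ⟶ Z),
      IsSES f g → S i X → S i Z → S i Y)
    (hcoprod : ∀ i : V, ∀ (ι : Type v) (g : ι → A), (∀ x, S i (g x)) → S i (∐ g))
    (hcompat : ∀ ⦃i j : V⦄, (i ⟶ j) → ∀ X : A, S i X → S j X)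
    (M : QuivRep V A)
    (hM : ∀ i : V, Mono (phi M i) ∧ S i (cokernel (phi M i))) :
    ∀ i : V, S i (M.obj i) := by
  refine hV.induction fun i hsources => ?_
  have hsum : S i (∐ fun p : Σ j : V, j ⟶ i => M.obj p.1) :=
    hcoprod i _ _ fun p => hcompat p.2 _ (hsources p.2)
  obtain ⟨hmono, hcok⟩ := hM i
  exact hext i _ _ (isSES_cokernel_of_mono (phi M i)) hsum hcok

open Paper CategoryTheory CategoryTheory.Limits in
theorem stmt7 (V : Type v) [Quiver.{v} V] (hV : IsLeftRooted V)
    (A : Type u) [Category.{v} A] [Abelian A] [HasCoproducts.{v} A] [AB4 A]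
    (S : V → A → Prop)
    (hext : ∀ i : V, ∀ ⦃X Y Z : A⦄ (f : X ⟶ Y) (g : Y ⟶ Z),
      IsSES f g → S i X → S i Z → S i Y)
    (hcoprod : ∀ i : V, ∀ (ι : Type v) (g : ι → A), (∀ x, S i (g x)) → S i (∐ g))
    (hcompat : ∀ ⦃i j : V⦄, (i ⟶ j) → ∀ X : A, S i X → S j X)
    (M : QuivRep V A)
    (hM : ∀ i : V, Mono (phi M i) ∧ S i (cokernel (phi M i))) :
    ∀ i : V, S i (M.obj i) :=
  stmt7_general V hV A S hext hcoprod hcompat M hM
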